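/- Let L be an MTL-algebra and let A ⊆ L. Then A is a Boolean filter of L if and only if A is both an MV-filter of L and a G-filter of L. Consequently, for a fuzzy set μ of L and 0 < α < β ≤ 1, every ∈-level set F(t) = {x ∈ L : μ(x) ≥ t} with t ∈ (α, β] is empty or a Boolean filter of L if and only if every such level set is empty or an MV-filter of L and empty or a G-filter of L. -/

import Mathlib

/-- An MTL-algebra: a bounded lattice with `⊥ ≠ ⊤`, a product `odot` and residuum `rimp`,
where `odot` is associative, commutative and monotone in each argument, `⊤` is a unit,
the Galois correspondence holds and prelinearity holds. -/
class MTL (L : Type*) extends Lattice L, BoundedOrder L where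
  odot : L → L → L
  rimp : L → L → L
  bot_ne_top : (⊥ : L) ≠ ⊤
  odot_assoc : ∀ x y z : L, odot (odot x y) z = odot x (odot y z)
  odot_comm : ∀ x y : L, odot x y = odot y x
  odot_mono_left : ∀ x y z : L, x ≤ y → odot x z ≤ odot y z
  odot_mono_right : ∀ x y z : L, x ≤ y → odot z x ≤ odot z y
  odot_top : ∀ x : L, odot x ⊤ = x
  galois : ∀ x y z : L, odot x y ≤ z ↔ x ≤ rimp y z
  prelinear : ∀ x y : L, rimp x y ⊔ rimp y x = ⊤

open MTL

variable {L : Type*} [MTL L]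

/-- A subset `A` is a filter: `1 ∈ A` and it is closed under modus ponens. -/
def IsFilter' (A : Set L) : Prop :=
  (⊤ : L) ∈ A ∧ ∀ x y : L, x ∈ A → rimp x y ∈ A → y ∈ A

/-- A Boolean filter: a filter containing `x ∨ x'` for all `x`, where `x' = x → 0`. -/
def IsBooleanFilter (A : Set L) : Prop :=
  IsFilter' A ∧ ∀ x : L, x ⊔ rimp x ⊥ ∈ A

/-- An MV-filter: a filter such that `x → y ∈ A` implies `((y → x) → x) → y ∈ A`. -/
def IsMVFilter (A : Set L) : Prop :=
  IsFilter' A ∧ ∀ x y : L, rimp x y ∈ A → rimp (rimp (rimp y x) x) y ∈ A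

/-- A G-filter: a filter such that `(x ⊙ x) → y ∈ A` implies `x → y ∈ A`. -/
def IsGFilter (A : Set L) : Prop :=
  IsFilter' A ∧ ∀ x y : L, rimp (odot x x) y ∈ A → rimp x y ∈ A

/-!
In a Boolean filter `A`, an element lies in `A` as soon as it lies above some `w` and above `w'`,
since `w ∨ w' ∈ A`. The MV- and the G-condition follow by applying this to `p → q`, where `p ∈ A`
is the premise and `q` the required conclusion, with `w = y` and `w = x` respectively.
Conversely, for `u = x ∨ x'` we have `u' ≤ x'` and `u' ≤ x''`, so `u' ⊙ u' ≤ 0`; the G-condition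
then puts `u'' = u' → 0` in `A`, and the MV-condition applied to `0 → u = 1` gives `u'' → u ∈ A`.
The statement about level sets follows pointwise in `t`.
-/

namespace MTL

theorem rimp_odot_le (x y : L) : odot (rimp x y) x ≤ y :=
  (galois _ _ _).mpr le_rfl

theorem odot_rimp_le (x y : L) : odot x (rimp x y) ≤ y :=
  odot_comm x _ ▸ rimp_odot_le x y

theorem odot_le_left (x y : L) : odot x y ≤ x := by
  simpa only [odot_top] using odot_mono_right y ⊤ x le_top

theorem odot_right_comm (x y z : L) : odot (odot x y) z = odot (odot x z) y := by
  rw [odot_assoc, odot_comm y, ← odot_assoc]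

theorem rimp_eq_top_of_le {x y : L} (h : x ≤ y) : rimp x y = ⊤ :=
  top_le_iff.mp <| (galois _ _ _).mp (by rwa [odot_comm, odot_top])

theorem rimp_le_rimp_left {x y z : L} (h : x ≤ y) : rimp z x ≤ rimp z y :=
  (galois _ _ _).mp ((rimp_odot_le z x).trans h)

theorem rimp_le_rimp_right {x y z : L} (h : x ≤ y) : rimp y z ≤ rimp x z :=
  (galois _ _ _).mp ((odot_mono_right _ _ _ h).trans (rimp_odot_le y z))

theorem le_rimp_rimp (x y : L) : x ≤ rimp (rimp x y) y :=
  (galois _ _ _).mp (odot_rimp_le x y)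

end MTL

theorem IsFilter'.mem_of_le {A : Set L} (hA : IsFilter' A) {x y : L} (hx : x ∈ A) (h : x ≤ y) :
    y ∈ A :=
  hA.2 x y hx (rimp_eq_top_of_le h ▸ hA.1)

theorem IsFilter'.rimp_mem_of_le {A : Set L} (hA : IsFilter' A) {x y : L} (h : x ≤ y) :
    rimp x y ∈ A :=
  rimp_eq_top_of_le h ▸ hA.1

theorem IsBooleanFilter.mem_of_le_of_rimp_bot_le {A : Set L} (hA : IsBooleanFilter A) {y z : L}
    (hy : y ≤ z) (hy' : rimp y ⊥ ≤ z) : z ∈ A :=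
  hA.1.mem_of_le (hA.2 y) (sup_le hy hy')

theorem IsBooleanFilter.isMVFilter {A : Set L} (hA : IsBooleanFilter A) : IsMVFilter A := by
  refine ⟨hA.1, fun x y hxy => hA.1.2 _ _ hxy (hA.mem_of_le_of_rimp_bot_le (y := y) ?_ ?_)⟩
  · rw [← galois, ← galois]
    exact (odot_le_left _ _).trans (odot_le_left _ _)
  · have hy' : odot (rimp y ⊥) (rimp (rimp y x) x) ≤ x :=
      (galois _ _ _).mpr <| (rimp_le_rimp_left bot_le).trans (le_rimp_rimp (rimp y x) x)
    rw [← galois, ← galois]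
    calc odot (odot (rimp y ⊥) (rimp x y)) (rimp (rimp y x) x)
        = odot (odot (rimp y ⊥) (rimp (rimp y x) x)) (rimp x y) := odot_right_comm _ _ _
      _ ≤ odot x (rimp x y) := odot_mono_left _ _ _ hy'
      _ ≤ y := odot_rimp_le x y

theorem IsBooleanFilter.isGFilter {A : Set L} (hA : IsBooleanFilter A) : IsGFilter A := by
  refine ⟨hA.1, fun x y hxy => hA.1.2 _ _ hxy (hA.mem_of_le_of_rimp_bot_le (y := x) ?_ ?_)⟩
  · rw [← galois, ← galois, odot_right_comm]
    exact odot_rimp_le _ y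
  · rw [← galois, ← galois, odot_right_comm]
    exact (odot_le_left _ _).trans ((rimp_odot_le x ⊥).trans bot_le)

theorem IsMVFilter.isBooleanFilter {A : Set L} (hM : IsMVFilter A) (hG : IsGFilter A) :
    IsBooleanFilter A := by
  refine ⟨hM.1, fun x => ?_⟩
  set u := x ⊔ rimp x ⊥
  have hsq : odot (rimp u ⊥) (rimp u ⊥) ≤ ⊥ :=
    calc odot (rimp u ⊥) (rimp u ⊥) ≤ odot (rimp (rimp x ⊥) ⊥) (rimp x ⊥) :=
          (odot_mono_left _ _ _ (rimp_le_rimp_right le_sup_right)).trans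
            (odot_mono_right _ _ _ (rimp_le_rimp_right le_sup_left))
      _ ≤ ⊥ := rimp_odot_le _ _
  have hu'' : rimp (rimp u ⊥) ⊥ ∈ A := hG.2 _ _ (hM.1.rimp_mem_of_le hsq)
  exact hM.1.2 _ u hu'' (hM.2 ⊥ u (hM.1.rimp_mem_of_le bot_le))

theorem isBooleanFilter_iff_isMVFilter_and_isGFilter (A : Set L) :
    IsBooleanFilter A ↔ IsMVFilter A ∧ IsGFilter A :=
  ⟨fun h => ⟨h.isMVFilter, h.isGFilter⟩, fun h => h.1.isBooleanFilter h.2⟩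

theorem stmt_19_general (A : Set L) (μ : L → ℝ)
    (α β : ℝ) :
    (IsBooleanFilter A ↔ IsMVFilter A ∧ IsGFilter A) ∧
      ((∀ t : ℝ, α < t → t ≤ β → ({x : L | t ≤ μ x} = ∅ ∨ IsBooleanFilter {x : L | t ≤ μ x})) ↔
        ((∀ t : ℝ, α < t → t ≤ β → ({x : L | t ≤ μ x} = ∅ ∨ IsMVFilter {x : L | t ≤ μ x})) ∧
          (∀ t : ℝ, α < t → t ≤ β → ({x : L | t ≤ μ x} = ∅ ∨ IsGFilter {x : L | t ≤ μ x})))) := by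
  refine ⟨isBooleanFilter_iff_isMVFilter_and_isGFilter A, ?_⟩
  simp only [isBooleanFilter_iff_isMVFilter_and_isGFilter, or_and_left, imp_and, forall_and]

theorem stmt_19 (A : Set L) (μ : L → ℝ) (hμ0 : ∀ x : L, 0 ≤ μ x) (hμ1 : ∀ x : L, μ x ≤ 1)
    (α β : ℝ) (hα : 0 < α) (hαβ : α < β) (hβ : β ≤ 1) :
    (IsBooleanFilter A ↔ IsMVFilter A ∧ IsGFilter A) ∧
      ((∀ t : ℝ, α < t → t ≤ β → ({x : L | t ≤ μ x} = ∅ ∨ IsBooleanFilter {x : L | t ≤ μ x})) ↔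
        ((∀ t : ℝ, α < t → t ≤ β → ({x : L | t ≤ μ x} = ∅ ∨ IsMVFilter {x : L | t ≤ μ x})) ∧
          (∀ t : ℝ, α < t → t ≤ β → ({x : L | t ≤ μ x} = ∅ ∨ IsGFilter {x : L | t ≤ μ x})))) :=
  stmt_19_general A μ α β
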